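/- Let p be an odd prime, n ≥ 1 an integer, and q = p^n. Then PSL(2, 𝔽_q) contains a subgroup which is a semidirect product U ⋊ ℤ/((q-1)/2) with faithful action, where U is the additive group of the field 𝔽_q (an elementary abelian p-group of rank n): there exist an injective group homomorphism φ from ℤ/((q-1)/2) into the automorphism group of the additive group of 𝔽_q, and an injective group homomorphism from the semidirect product U ⋊_φ (ℤ/((q-1)/2)) into PSL(2, 𝔽_q). -/

import Mathlib

/-!
Let `g` generate `𝔽_q^×`, so `g` has order `2m` with `m = (q - 1)/2`. In `SL(2, 𝔽_q)` the diagonal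
matrix `diag(g, g⁻¹)` conjugates the unipotent matrix `[[1, x], [0, 1]]` to `[[1, g² x], [0, 1]]`,
and its `m`-th power `diag(g^m, g^{-m}) = -1` is central; so its image in `PSL(2, 𝔽_q)` has `m`-th power `1`
and, together with the unipotent matrices, realises `𝔽_q ⋊ ⟨g²⟩`, where `⟨g²⟩ ≅ ℤ/m` acts faithfully by
multiplication. The resulting map is injective because `[[1, x], [0, 1]] · diag(a, a⁻¹)` is scalar
only when `x = 0` and `a² = 1`, and for `a = g^j` the latter says that `j` acts trivially.
-/

/-- The projective special linear group `PSL(n, F)`: the quotient of `SL(n, F)` by its center. -/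
abbrev PSL (n : ℕ) (F : Type) [Field F] :=
  Matrix.SpecialLinearGroup (Fin n) F ⧸ Subgroup.center (Matrix.SpecialLinearGroup (Fin n) F)

open Matrix Function
open scoped MatrixGroups

section ZModPowHom

variable {G : Type*} [Group G] {m : ℕ}

lemma Multiplicative.exists_ofAdd_intCast (k : Multiplicative (ZMod m)) :
    ∃ j : ℤ, Multiplicative.ofAdd (j : ZMod m) = k :=
  ZMod.intCast_surjective k.toAdd

def zmodPowHom (h : G) (hm : h ^ m = 1) : Multiplicative (ZMod m) →* G :=
  AddMonoidHom.toMultiplicativeLeft <|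
    ZMod.lift m ⟨zmultiplesHom _ (Additive.ofMul h), by
      rw [zmultiplesHom_apply, natCast_zsmul, ← ofMul_pow, hm, ofMul_one]⟩

@[simp]
lemma zmodPowHom_ofAdd_intCast (h : G) (hm : h ^ m = 1) (j : ℤ) :
    zmodPowHom h hm (.ofAdd (j : ZMod m)) = h ^ j := by
  simp [zmodPowHom, ← ofMul_zpow]

lemma zmodPowHom_injective (h : G) (hm : h ^ m = 1) (horder : orderOf h = m) :
    Injective (zmodPowHom h hm) := by
  rw [injective_iff_map_eq_one]
  intro k hk
  obtain ⟨j, rfl⟩ := Multiplicative.exists_ofAdd_intCast k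
  rw [zmodPowHom_ofAdd_intCast, ← orderOf_dvd_iff_zpow_eq_one, horder,
    ← ZMod.intCast_zmod_eq_zero_iff_dvd] at hk
  rw [hk]
  rfl

end ZModPowHom

namespace SL2

variable (R : Type*) [CommRing R]

def unipotent : Multiplicative R →* SL(2, R) where
  toFun x := ⟨!![1, x.toAdd; 0, 1], by simp [det_fin_two_of]⟩
  map_one' := Subtype.ext (by simp [one_fin_two])
  map_mul' x y := Subtype.ext <|
    show !![1, (x * y).toAdd; 0, 1] = !![1, x.toAdd; 0, 1] * !![1, y.toAdd; 0, 1] by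
      simp [add_comm]

def diagonal : Rˣ →* SL(2, R) where
  toFun a := ⟨!![(a : R), 0; 0, ((a⁻¹ : Rˣ) : R)], by simp [det_fin_two_of]⟩
  map_one' := Subtype.ext (by simp [one_fin_two])
  map_mul' a b := Subtype.ext <|
    show !![((a * b : Rˣ) : R), 0; 0, (((a * b)⁻¹ : Rˣ) : R)] =
        !![(a : R), 0; 0, ((a⁻¹ : Rˣ) : R)] * !![(b : R), 0; 0, ((b⁻¹ : Rˣ) : R)] by
      simp [mul_comm]

variable {R}

@[simp]
lemma coe_unipotent (x : Multiplicative R) :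
    (unipotent R x : Matrix (Fin 2) (Fin 2) R) = !![1, x.toAdd; 0, 1] := rfl

@[simp]
lemma coe_diagonal (a : Rˣ) :
    (diagonal R a : Matrix (Fin 2) (Fin 2) R) = !![(a : R), 0; 0, ((a⁻¹ : Rˣ) : R)] := rfl

lemma diagonal_mul_unipotent_mul_inv (a : Rˣ) (x : Multiplicative R) :
    diagonal R a * unipotent R x * (diagonal R a)⁻¹ =
      unipotent R (.ofAdd ((a : R) ^ 2 * x.toAdd)) := by
  rw [mul_inv_eq_iff_eq_mul]
  ext i j
  fin_cases i <;> fin_cases j <;> simp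
  rw [mul_right_comm, sq, mul_assoc (a : R), Units.mul_inv, mul_one]

variable {F : Type*} [Field F]

lemma unipotent_mul_diagonal_mem_center_iff (x : Multiplicative F) (a : Fˣ) :
    unipotent F x * diagonal F a ∈ Subgroup.center SL(2, F) ↔ x = 1 ∧ a ^ 2 = 1 := by
  rw [Matrix.SpecialLinearGroup.mem_center_iff, sq, mul_eq_one_iff_eq_inv, Units.ext_iff,
    Units.val_inv_eq_inv_val]
  constructor
  · rintro ⟨r, -, hr⟩
    have h00 := congr_fun₂ hr 0 0
    have h01 := congr_fun₂ hr 0 1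
    have h11 := congr_fun₂ hr 1 1
    simp at h00 h01 h11
    exact ⟨h01, h00.symm.trans h11⟩
  · rintro ⟨rfl, ha⟩
    refine ⟨a, ?_, ?_⟩
    · rw [Fintype.card_fin, sq]
      nth_rw 2 [ha]
      exact mul_inv_cancel₀ a.ne_zero
    · ext i j
      fin_cases i <;> fin_cases j <;> simp [← ha]

end SL2

def unitsMulAut (R : Type*) [Ring R] : Rˣ →* MulAut (Multiplicative R) :=
  (MulAutMultiplicative R).symm.toMonoidHom.comp (DistribMulAction.toAddAut Rˣ R)

@[simp]
lemma unitsMulAut_apply {R : Type*} [Ring R] (a : Rˣ) (x : Multiplicative R) :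
    unitsMulAut R a x = .ofAdd ((a : R) * x.toAdd) := rfl

lemma unitsMulAut_injective (R : Type*) [Ring R] : Injective (unitsMulAut R) := by
  rw [injective_iff_map_eq_one]
  intro a ha
  simpa using congr(Multiplicative.toAdd ($ha (.ofAdd 1)))

section Metacyclic

variable {F : Type} [Field F] {m : ℕ} {g : Fˣ}

lemma orderOf_sq_of_orderOf_eq_two_mul (hg : orderOf g = 2 * m) : orderOf (g ^ 2) = m := by
  rw [orderOf_pow_of_dvd two_ne_zero (hg ▸ dvd_mul_right 2 m), hg,
    Nat.mul_div_cancel_left m two_pos]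

def squarePowHom (hg : orderOf g = 2 * m) : Multiplicative (ZMod m) →* Fˣ :=
  zmodPowHom (g ^ 2) (orderOf_sq_of_orderOf_eq_two_mul hg ▸ pow_orderOf_eq_one _)

lemma squarePowHom_ofAdd_intCast (hg : orderOf g = 2 * m) (j : ℤ) :
    squarePowHom hg (.ofAdd (j : ZMod m)) = (g ^ j) ^ 2 := by
  rw [squarePowHom, zmodPowHom_ofAdd_intCast, ← zpow_natCast, zpow_comm, zpow_natCast]

lemma squarePowHom_injective (hg : orderOf g = 2 * m) : Injective (squarePowHom hg) :=
  zmodPowHom_injective _ _ (orderOf_sq_of_orderOf_eq_two_mul hg)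

def metacyclicAction (hg : orderOf g = 2 * m) :
    Multiplicative (ZMod m) →* MulAut (Multiplicative F) :=
  (unitsMulAut F).comp (squarePowHom hg)

lemma metacyclicAction_injective (hg : orderOf g = 2 * m) : Injective (metacyclicAction hg) :=
  (unitsMulAut_injective F).comp (squarePowHom_injective hg)

lemma diagonal_pow_mem_center (hg : orderOf g = 2 * m) :
    SL2.diagonal F g ^ m ∈ Subgroup.center SL(2, F) := by
  rw [← map_pow, ← one_mul (SL2.diagonal F _), ← map_one (SL2.unipotent F),
    SL2.unipotent_mul_diagonal_mem_center_iff, ← pow_mul, mul_comm, ← hg]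
  exact ⟨rfl, pow_orderOf_eq_one g⟩

def diagonalPSLHom (hg : orderOf g = 2 * m) : Multiplicative (ZMod m) →* PSL 2 F :=
  zmodPowHom (QuotientGroup.mk' _ (SL2.diagonal F g))
    (by rw [← map_pow, QuotientGroup.mk'_apply, QuotientGroup.eq_one_iff]
        exact diagonal_pow_mem_center hg)

variable (F) in
def unipotentPSLHom : Multiplicative F →* PSL 2 F :=
  (QuotientGroup.mk' _).comp (SL2.unipotent F)

lemma unipotentPSLHom_metacyclicAction (hg : orderOf g = 2 * m) (k : Multiplicative (ZMod m)) :
    (unipotentPSLHom F).comp (metacyclicAction hg k).toMonoidHom =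
      (MulAut.conj (diagonalPSLHom hg k)).toMonoidHom.comp (unipotentPSLHom F) := by
  obtain ⟨j, rfl⟩ := Multiplicative.exists_ofAdd_intCast k
  refine MonoidHom.ext fun x => ?_
  simp only [MonoidHom.comp_apply, MulEquiv.coe_toMonoidHom, MulAut.conj_apply, metacyclicAction,
    squarePowHom_ofAdd_intCast, unitsMulAut_apply, diagonalPSLHom, zmodPowHom_ofAdd_intCast,
    unipotentPSLHom]
  rw [← map_zpow, ← map_zpow, ← map_inv, ← map_mul, ← map_mul, SL2.diagonal_mul_unipotent_mul_inv,
    Units.val_pow_eq_pow_val]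

def metacyclicEmbedding (hg : orderOf g = 2 * m) :
    Multiplicative F ⋊[metacyclicAction hg] Multiplicative (ZMod m) →* PSL 2 F :=
  SemidirectProduct.lift _ _ (unipotentPSLHom_metacyclicAction hg)

lemma metacyclicEmbedding_injective (hg : orderOf g = 2 * m) :
    Injective (metacyclicEmbedding hg) := by
  rw [injective_iff_map_eq_one]
  rintro ⟨x, k⟩ hxk
  change unipotentPSLHom F x * diagonalPSLHom hg k = 1 at hxk
  obtain ⟨j, rfl⟩ := Multiplicative.exists_ofAdd_intCast k
  have : SL2.unipotent F x * SL2.diagonal F (g ^ j) ∈ Subgroup.center SL(2, F) := by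
    rw [← QuotientGroup.eq_one_iff]
    rw [diagonalPSLHom, zmodPowHom_ofAdd_intCast, ← map_zpow, ← map_zpow, unipotentPSLHom,
      MonoidHom.comp_apply, ← map_mul] at hxk
    exact hxk
  obtain ⟨rfl, hj⟩ := (SL2.unipotent_mul_diagonal_mem_center_iff _ _).mp this
  have hk : Multiplicative.ofAdd (j : ZMod m) = 1 :=
    squarePowHom_injective hg (by rw [squarePowHom_ofAdd_intCast, hj, map_one])
  rw [hk]
  rfl

end Metacyclic

theorem FiniteField.exists_semidirectProduct_embedding_psl_two {F : Type} [Field F] [Finite F]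
    (hF : Odd (Nat.card F)) :
    ∃ (φ : Multiplicative (ZMod ((Nat.card F - 1) / 2)) →* MulAut (Multiplicative F))
      (ψ : Multiplicative F ⋊[φ] Multiplicative (ZMod ((Nat.card F - 1) / 2)) →* PSL 2 F),
      Injective φ ∧ Injective ψ := by
  obtain ⟨g, hg⟩ := IsCyclic.exists_ofOrder_eq_natCard (α := Fˣ)
  have heven : 2 ∣ Nat.card F - 1 := (Nat.Odd.sub_odd hF odd_one).two_dvd
  rw [Nat.card_units, ← Nat.mul_div_cancel' heven] at hg
  exact ⟨_, _, metacyclicAction_injective hg, metacyclicEmbedding_injective hg⟩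

/-- For an odd prime `p` and `q = p^n`, the group `PSL(2, 𝔽_q)` contains a subgroup which is a
semidirect product `U ⋊ ℤ/((q-1)/2)` with faithful action, where `U` is the additive group of
the field `𝔽_q` (an elementary abelian `p`-group of rank `n`). -/
theorem psl_two_prime_power_contains_metacyclic (p n : ℕ) [Fact p.Prime] (hp : Odd p)
    (hn : 1 ≤ n) :
    ∃ (φ : Multiplicative (ZMod ((p ^ n - 1) / 2)) →* MulAut (Multiplicative (GaloisField p n)))
      (ψ : (Multiplicative (GaloisField p n)) ⋊[φ]
          (Multiplicative (ZMod ((p ^ n - 1) / 2))) →* PSL 2 (GaloisField p n)),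
      Function.Injective φ ∧ Function.Injective ψ := by
  have hcard : Nat.card (GaloisField p n) = p ^ n := GaloisField.card p n (by omega)
  rw [← hcard]
  exact FiniteField.exists_semidirectProduct_embedding_psl_two (hcard ▸ hp.pow)
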